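/- Let k be a field of characteristic zero and k(x, y) an algebraic function field of one variable over k defined by an irreducible f ∈ k[X, Y]. If (x̄, ȳ) ∈ k² satisfies f(x̄, ȳ) = 0 and ∂f/∂Y(x̄, ȳ) ≠ 0, then the field of constants of k(x, y) (the set of elements algebraic over k) equals k. -/

import Mathlib

/-!
Because `x` is transcendental and `f` is irreducible, Gauss's lemma shows that the kernel of
`k[X, Y] → L, (X, Y) ↦ (x, y)` is `(f)`, so evaluation at `(x̄, ȳ)` factors through the
coordinate ring `R = k[x, y]`. Writing `f = q (X - x̄) + u (Y - ȳ)` forces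
`u(x̄, ȳ) = ∂f/∂Y(x̄, ȳ) ≠ 0`, so the maximal ideal of the local ring of `R` at `(x̄, ȳ)` is
generated by `x - x̄`. This local ring is therefore a discrete valuation ring inside `L = Frac R`
with residue field `k`: every `z ∈ L` has `z` or `z⁻¹` in it. An algebraic element `w` of the
local ring equals its residue `c ∈ k`, because otherwise `w - c` would be a nonzero root of its
minimal polynomial lying in the maximal ideal, which forces the constant coefficient of that
polynomial to vanish.
-/

open scoped Polynomial
open IsLocalRing

attribute [local instance] RingHom.ker_isPrime

namespace Polynomial

theorem ker_eval₂RingHom_eq_span_singleton {R L : Type*} [CommRing R] [IsDomain R]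
    [IsGCDMonoid R] [Field L] {φ : R →+* L} (hφ : Function.Injective φ) {y : L} {F : R[X]}
    (hF : Irreducible F) (hdeg : F.natDegree ≠ 0) (hFy : F.eval₂ φ y = 0) :
    RingHom.ker (eval₂RingHom φ y) = Ideal.span {F} := by
  refine le_antisymm (fun (G : R[X]) (hG : G.eval₂ φ y = 0) => ?_)
    ((Ideal.span_singleton_le_iff_mem _).mpr hFy)
  let K := FractionRing R
  let θ : K →+* L := IsFractionRing.lift hφ
  have heval (P : R[X]) : (P.map (algebraMap R K)).eval₂ θ y = P.eval₂ φ y := by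
    rw [eval₂_map, show θ.comp (algebraMap R K) = φ from IsLocalization.lift_comp _]
  have hprim := hF.isPrimitive hdeg
  have hFK : Irreducible (F.map (algebraMap R K)) :=
    hprim.irreducible_iff_irreducible_map_fraction_map.mp hF
  rw [Ideal.mem_span_singleton]
  refine hprim.dvd_of_fraction_map_dvd_fraction_map (K := K) ?_
  by_contra hndvd
  -- Otherwise `F` and `G` are coprime over `K`, yet both vanish at `y`.
  obtain ⟨a, b, hab⟩ := hFK.coprime_iff_not_dvd.mpr hndvd
  have := congrArg (eval₂ θ y) hab
  rw [eval₂_add, eval₂_mul, eval₂_mul, heval, heval, hFy, hG, eval₂_one] at this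
  simp at this

end Polynomial

namespace MvPolynomial

noncomputable def finTwoEquiv (k : Type*) [CommRing k] : MvPolynomial (Fin 2) k ≃ₐ[k] k[X][X] :=
  (renameEquiv k (Equiv.swap 0 1)).trans
    ((finSuccEquiv k 1).trans (Polynomial.mapAlgEquiv (uniqueAlgEquiv k (Fin 1))))

@[simp] lemma finTwoEquiv_X_zero (k : Type*) [CommRing k] :
    finTwoEquiv k (X 0) = Polynomial.C Polynomial.X := by
  simp only [finTwoEquiv, AlgEquiv.trans_apply, renameEquiv_apply, rename_X, Equiv.swap_apply_left]
  rw [show (1 : Fin 2) = Fin.succ 0 from rfl, finSuccEquiv_X_succ]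
  simp

@[simp] lemma finTwoEquiv_X_one (k : Type*) [CommRing k] :
    finTwoEquiv k (X 1) = Polynomial.X := by
  simp [finTwoEquiv, finSuccEquiv_X_zero]

theorem ker_aeval_eq_span_singleton {k L : Type*} [Field k] [Field L] [Algebra k L]
    {x y : L} (hx : Transcendental k x) {f : MvPolynomial (Fin 2) k} (hf : Irreducible f)
    (hfxy : aeval ![x, y] f = 0) :
    RingHom.ker (aeval ![x, y] : MvPolynomial (Fin 2) k →ₐ[k] L) = Ideal.span {f} := by
  let e := (finTwoEquiv k).toRingEquiv
  let Φ := Polynomial.eval₂RingHom ((Polynomial.aeval x : k[X] →ₐ[k] L) : k[X] →+* L) y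
  have he : Φ.comp e =
      ((aeval ![x, y] : MvPolynomial (Fin 2) k →ₐ[k] L) : MvPolynomial (Fin 2) k →+* L) := by
    apply ringHom_ext
    · intro a
      have : finTwoEquiv k (C a) = Polynomial.C (Polynomial.C a) := (finTwoEquiv k).commutes a
      simp [Φ, e, this]
    · intro i
      fin_cases i <;> simp [Φ, e]
  have hΦf : (e f).eval₂ _ y = 0 := (RingHom.congr_fun he f).trans hfxy
  have hdeg : (e f).natDegree ≠ 0 := by
    intro h
    rw [Polynomial.eq_C_of_natDegree_eq_zero h, Polynomial.eval₂_C] at hΦf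
    refine hx ⟨_, fun h0 => hf.ne_zero (e.injective ?_), hΦf⟩
    rw [Polynomial.eq_C_of_natDegree_eq_zero h, h0, map_zero, map_zero]
  have hker : RingHom.ker Φ = Ideal.span {e f} := Polynomial.ker_eval₂RingHom_eq_span_singleton
    (transcendental_iff_injective.mp hx) (hf.map e) hdeg hΦf
  rw [AlgHom.ker_coe, ← he, ← RingHom.comap_ker, hker, Ideal.comap_coe, ← Ideal.map_symm,
    Ideal.map_span, Set.image_singleton, RingEquiv.symm_apply_apply]

theorem sub_C_eval_mem_span_X_sub_C {R σ : Type*} [CommRing R] (a : σ → R)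
    (p : MvPolynomial σ R) :
    p - C (eval a p) ∈ Ideal.span (Set.range fun i => X i - C (a i)) := by
  induction p using MvPolynomial.induction_on with
  | C c => simp
  | add p q hp hq => simpa [add_sub_add_comm] using add_mem hp hq
  | mul_X p i hp =>
    have hi : X i - C (a i) ∈ Ideal.span (Set.range fun i => X i - C (a i)) :=
      Ideal.subset_span ⟨i, rfl⟩
    convert add_mem (Ideal.mul_mem_right (X i) _ hp) (Ideal.mul_mem_left _ (C (eval a p)) hi)
      using 1
    simp only [map_mul, eval_X]
    ring

theorem mem_span_X_sub_C_pair_of_eval_eq_zero {k : Type*} [CommRing k]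
    {g : MvPolynomial (Fin 2) k} {xb yb : k} (hg : eval ![xb, yb] g = 0) :
    g ∈ Ideal.span {X 0 - C xb, X 1 - C yb} := by
  have hrange : (Set.range fun i => X i - C (![xb, yb] i)) = {X 0 - C xb, X 1 - C yb} := by
    ext
    simp [Fin.exists_fin_two, eq_comm]
  simpa [hg, hrange] using sub_C_eval_mem_span_X_sub_C ![xb, yb] g

theorem exists_eq_mul_X_sub_C_add_mul_X_sub_C {k : Type*} [CommRing k]
    {f : MvPolynomial (Fin 2) k} {xb yb : k} (hf : eval ![xb, yb] f = 0) :
    ∃ q u : MvPolynomial (Fin 2) k, q * (X 0 - C xb) + u * (X 1 - C yb) = f ∧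
      eval ![xb, yb] u = eval ![xb, yb] (pderiv 1 f) := by
  obtain ⟨q, u, rfl⟩ := Ideal.mem_span_pair.mp (mem_span_X_sub_C_pair_of_eval_eq_zero hf)
  exact ⟨q, u, rfl, by simp⟩

end MvPolynomial

namespace Localization.AtPrime

variable {R : Type*} [CommRing R] {p : Ideal R} [p.IsPrime] {t s q u : R}

theorem maximalIdeal_eq_span_singleton (hp : p ≤ Ideal.span {t, s}) (ht : t ∈ p) (hu : u ∉ p)
    (hrel : q * t + u * s = 0) :
    maximalIdeal (Localization.AtPrime p) = Ideal.span {algebraMap R _ t} := by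
  let ι := algebraMap R (Localization.AtPrime p)
  have hs : ι s ∈ Ideal.span {ι t} := by
    obtain ⟨v, hv⟩ := IsLocalization.map_units (Localization.AtPrime p) (⟨u, hu⟩ : p.primeCompl)
    refine Ideal.mem_span_singleton'.mpr ⟨-(↑v⁻¹ * ι q), ?_⟩
    have := congrArg ι hrel
    rw [map_add, map_mul, map_mul, ← hv, map_zero] at this
    linear_combination (-↑v⁻¹ : Localization.AtPrime p) * this + ι s * v.inv_mul
  rw [← Localization.AtPrime.map_eq_maximalIdeal]
  refine le_antisymm ?_ (Ideal.span_le.mpr ?_)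
  · refine (Ideal.map_mono hp).trans ?_
    rw [Ideal.map_span, Set.image_pair, Ideal.span_le, Set.insert_subset_iff,
      Set.singleton_subset_iff]
    exact ⟨Ideal.subset_span rfl, hs⟩
  · simpa using Ideal.mem_map_of_mem _ ht

theorem valuationRing_of_le_span_pair [IsDomain R] [IsNoetherianRing R]
    (hp : p ≤ Ideal.span {t, s}) (ht : t ∈ p) (hu : u ∉ p) (hrel : q * t + u * s = 0) :
    ValuationRing (Localization.AtPrime p) := by
  have : (maximalIdeal (Localization.AtPrime p)).IsPrincipal :=
    ⟨⟨_, maximalIdeal_eq_span_singleton hp ht hu hrel⟩⟩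
  exact ((tfae_of_isNoetherianRing_of_isLocalRing_of_isDomain _).out 1 4).mpr this

end Localization.AtPrime

theorem MvPolynomial.valuationRing_atPrime_of_pderiv_ne_zero {k : Type*} [Field k]
    {I : Ideal (MvPolynomial (Fin 2) k)} [I.IsPrime] {f : MvPolynomial (Fin 2) k} (hfI : f ∈ I)
    {xb yb : k} (hI : ∀ g ∈ I, aeval ![xb, yb] g = 0) (hsm : eval ![xb, yb] (pderiv 1 f) ≠ 0) :
    ValuationRing (Localization.AtPrime (RingHom.ker (Ideal.Quotient.liftₐ I _ hI))) := by
  let mk := Ideal.Quotient.mk I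
  have hmem_ker (g : MvPolynomial (Fin 2) k) :
      mk g ∈ RingHom.ker (Ideal.Quotient.liftₐ I _ hI) ↔ eval ![xb, yb] g = 0 := by
    simp [mk, RingHom.mem_ker, coe_aeval_eq_eval]
  obtain ⟨q, u, hf, hu⟩ := exists_eq_mul_X_sub_C_add_mul_X_sub_C (by
    simpa [coe_aeval_eq_eval] using hI f hfI)
  refine Localization.AtPrime.valuationRing_of_le_span_pair (t := mk (X 0 - C xb))
    (s := mk (X 1 - C yb)) (q := mk q) (u := mk u) ?_
    ((hmem_ker _).mpr (by simp)) (by rwa [hmem_ker, hu]) ?_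
  · intro a ha
    obtain ⟨g, rfl⟩ := Ideal.Quotient.mk_surjective a
    have := Ideal.mem_map_of_mem mk (mem_span_X_sub_C_pair_of_eval_eq_zero ((hmem_ker g).mp ha))
    rwa [Ideal.map_span, Set.image_pair] at this
  · rw [← map_mul, ← map_mul, ← map_add, hf, Ideal.Quotient.eq_zero_iff_mem]
    exact hfI

section Residue

variable {k L : Type*} [Field k] [Field L] [Algebra k L]

theorem algebraMap_apply_eq_of_isAlgebraic {A : Type*} [CommRing A] [Algebra k A]
    {j : A →ₐ[k] L} (hj : Function.Injective j) (ρ : A →ₐ[k] k) {w : A}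
    (hw : IsAlgebraic k (j w)) : algebraMap k L (ρ w) = j w := by
  let w' := w - algebraMap k A (ρ w)
  have hρw' : ρ w' = 0 := by simp [w']
  have hjw' : j w' = j w - algebraMap k L (ρ w) := by simp [w']
  by_contra hne
  have hd : j w' ≠ 0 := by
    rw [hjw']
    exact sub_ne_zero.mpr (Ne.symm hne)
  let P := minpoly k (j w')
  have hint : IsIntegral k (j w') := by
    rw [hjw']
    exact (hw.sub (isAlgebraic_algebraMap _)).isIntegral
  have hPw' : Polynomial.aeval w' P = 0 :=
    hj (by rw [← Polynomial.aeval_algHom_apply, minpoly.aeval, map_zero])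
  have hP0 : P.coeff 0 = 0 := by
    rw [Polynomial.coeff_zero_eq_aeval_zero, ← hρw', Polynomial.aeval_algHom_apply, hPw',
      map_zero, hρw']
  exact minpoly.coeff_zero_ne_zero hint hd hP0

theorem exists_algebraMap_eq_div_of_isAlgebraic {A : Type*} [CommRing A] [IsDomain A]
    [ValuationRing A] [Algebra k A] {j : A →ₐ[k] L} (hj : Function.Injective j) (ρ : A →ₐ[k] k)
    (a b : A) (hz : IsAlgebraic k (j a / j b)) : ∃ c : k, algebraMap k L c = j a / j b := by
  obtain ⟨c, hc | hc⟩ := ValuationRing.cond a b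
  · by_cases ha : j a = 0
    · exact ⟨0, by simp [ha]⟩
    have hinv : (j a / j b)⁻¹ = j c := by rw [inv_div, ← hc, map_mul, mul_div_cancel_left₀ _ ha]
    refine ⟨(ρ c)⁻¹, ?_⟩
    rw [map_inv₀, algebraMap_apply_eq_of_isAlgebraic hj ρ (hinv ▸ hz.inv), ← hinv, inv_inv]
  · by_cases hb : j b = 0
    · exact ⟨0, by simp [hb]⟩
    have hz' : j a / j b = j c := by rw [← hc, map_mul, mul_div_cancel_left₀ _ hb]
    exact ⟨ρ c, by rw [hz', algebraMap_apply_eq_of_isAlgebraic hj ρ (hz' ▸ hz)]⟩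

theorem exists_algebraMap_eq_div_of_valuationRing_atPrime_ker {R : Type*} [CommRing R]
    [IsDomain R] [Algebra k R] {j : R →ₐ[k] L} (hj : Function.Injective j) (ψ : R →ₐ[k] k)
    [ValuationRing (Localization.AtPrime (RingHom.ker ψ))] (a b : R)
    (hz : IsAlgebraic k (j a / j b)) : ∃ c : k, algebraMap k L c = j a / j b := by
  let A := Localization.AtPrime (RingHom.ker ψ)
  have hψ (s : (RingHom.ker ψ).primeCompl) : IsUnit (ψ s) := isUnit_iff_ne_zero.mpr s.2
  have hjs (s : (RingHom.ker ψ).primeCompl) : IsUnit (j s) :=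
    isUnit_iff_ne_zero.mpr ((map_ne_zero_iff _ hj).mpr (ne_of_mem_of_not_mem (zero_mem _) s.2).symm)
  let jA : A →ₐ[k] L := IsLocalization.liftAlgHom hjs
  have hjA : Function.Injective jA := by
    refine IsLocalization.injective_of_map_algebraMap_zero (M := (RingHom.ker ψ).primeCompl)
      (S := A) (jA : A →+* L) fun r hr => ?_
    rw [AlgHom.coe_toRingHom, IsLocalization.liftAlgHom_apply, IsLocalization.lift_eq] at hr
    rw [(map_eq_zero_iff _ hj).mp hr, map_zero]
  have := exists_algebraMap_eq_div_of_isAlgebraic hjA (IsLocalization.liftAlgHom hψ)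
    (algebraMap R A a) (algebraMap R A b) (by simpa [jA] using hz)
  simpa [jA] using this

end Residue

open MvPolynomial

theorem constants_eq_base_field
    {k L : Type*} [Field k] [Field L] [Algebra k L]
    (x y : L) (htrans : Transcendental k x)
    (hgen : IntermediateField.adjoin k {x, y} = ⊤)
    (f : MvPolynomial (Fin 2) k) (hirr : Irreducible f)
    (hfxy : MvPolynomial.aeval ![x, y] f = 0)
    (xb yb : k)
    (hpt : MvPolynomial.eval ![xb, yb] f = 0)
    (hsm : MvPolynomial.eval ![xb, yb] (MvPolynomial.pderiv 1 f) ≠ 0) :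
    ∀ z : L, IsAlgebraic k z → ∃ c : k, algebraMap k L c = z := by
  intro z hz
  let φ : MvPolynomial (Fin 2) k →ₐ[k] L := aeval ![x, y]
  have hvanish : ∀ g ∈ RingHom.ker φ, aeval ![xb, yb] g = 0 := by
    rw [ker_aeval_eq_span_singleton htrans hirr hfxy]
    intro g hg
    obtain ⟨c, rfl⟩ := Ideal.mem_span_singleton'.mp hg
    simp [hpt]
  have := valuationRing_atPrime_of_pderiv_ne_zero (I := RingHom.ker φ) hfxy hvanish hsm
  have hzmem : z ∈ IntermediateField.adjoin k (Set.range ![x, y]) := by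
    rw [Matrix.range_cons_cons_empty, hgen]
    trivial
  obtain ⟨r, s, rfl⟩ := (IntermediateField.mem_adjoin_range_iff k _ z).mp hzmem
  exact exists_algebraMap_eq_div_of_valuationRing_atPrime_ker (Ideal.kerLiftAlg_injective φ)
    (Ideal.Quotient.liftₐ _ _ hvanish) (Ideal.Quotient.mk _ r) (Ideal.Quotient.mk _ s) hz
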